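/- arXiv:2503.15032 — 4 statements merged into one kernel-verified Lean document; each statement's English description precedes it below -/
import Mathlib

section
/- Let c(n,m) denote the number of increasing 1,2-trees on the vertex set {1,…,n} having exactly m edges. Then c(1,0) = 1, c(1,m) = 0 for every m ≥ 1, c(2,1) = 1, and for all integers n ≥ 2 and m ≥ 2 one has c(n,m) = (n−1)·c(n−1,m−1) + (m−2)·c(n−1,m−2). -/
open SimpleGraph

/-- The set of neighbors of `v` having a smaller label. -/
def lowerNbrs {n : ℕ} (G : SimpleGraph (Fin n)) (v : Fin n) : Set (Fin n) :=
  {x | G.Adj v x ∧ x < v}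

/-- `G` is an increasing 1,2-tree: every vertex other than the first one has a nonempty
set of smaller neighbors, of cardinality at most 2, forming a clique. -/
def IsIncreasing12Tree {n : ℕ} (G : SimpleGraph (Fin n)) : Prop :=
  ∀ v : Fin n, 1 ≤ v.val →
    (lowerNbrs G v).Nonempty ∧ (lowerNbrs G v).ncard ≤ 2 ∧
      ∀ x ∈ lowerNbrs G v, ∀ y ∈ lowerNbrs G v, x ≠ y → G.Adj x y

/-- The set of vertices reachable from `v` after deleting the edge `{u,v}`
(in a tree, the vertex set of the subtree rooted at `v` when `v` is the child endpoint). -/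
def subtreeSet {n : ℕ} (G : SimpleGraph (Fin n)) (u v : Fin n) : Set (Fin n) :=
  {w | (G.deleteEdges {s(u, v)}).Reachable v w}

/-- `v` is the child endpoint of the edge `{u,v}`: after deleting this edge,
`v` is no longer reachable from the root. -/
def IsChild {n : ℕ} (G : SimpleGraph (Fin n)) (root u v : Fin n) : Prop :=
  G.Adj u v ∧ ¬ (G.deleteEdges {s(u, v)}).Reachable root v

/-- The minimal label occurring in a set of vertices (labels being `Fin.val`). -/
noncomputable def minLabel {n : ℕ} (S : Set (Fin n)) : ℕ := sInf (Fin.val '' S)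

/-- An edge `{u,v}` with child endpoint `v` is a twist if the minimal label in the
subtree rooted at `v` is smaller than the label of `u`. -/
def IsTwist {n : ℕ} (G : SimpleGraph (Fin n)) (root : Fin n) (e : Sym2 (Fin n)) : Prop :=
  ∃ u v : Fin n, e = s(u, v) ∧ IsChild G root u v ∧ minLabel (subtreeSet G u v) < u.val

/-- An edge `{u,v}` with child endpoint `v` is increasing if the label of `u` is smaller
than every label in the subtree rooted at `v`. -/
def IsIncreasingEdge {n : ℕ} (G : SimpleGraph (Fin n)) (root : Fin n) (e : Sym2 (Fin n)) : Prop :=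
  ∃ u v : Fin n, e = s(u, v) ∧ IsChild G root u v ∧ u.val < minLabel (subtreeSet G u v)

/-- The number of twists of `G` (with respect to the given root). -/
noncomputable def numTwists {n : ℕ} (G : SimpleGraph (Fin n)) (root : Fin n) : ℕ :=
  Nat.card {e : Sym2 (Fin n) // e ∈ G.edgeSet ∧ IsTwist G root e}

/-- The number of increasing 1,2-trees on `n` vertices with `m` edges. -/
noncomputable def numInc12Trees (n m : ℕ) : ℕ :=
  Nat.card {G : SimpleGraph (Fin n) // IsIncreasing12Tree G ∧ G.edgeSet.ncard = m}

/-- The number of Cayley trees on `n ≥ 1` vertices (rooted at the vertex with label 1)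
with exactly `j` twists. -/
noncomputable def numCayleyTwist (n j : ℕ) (h : 0 < n) : ℕ :=
  Nat.card {G : SimpleGraph (Fin n) // G.IsTree ∧ numTwists G ⟨0, h⟩ = j}

/-!
Removing the largest vertex of an increasing 1,2-tree on `k + 1` vertices with `m` edges leaves an
increasing 1,2-tree on `k` vertices, and the removed vertex was attached either to one of the `k`
old vertices (removing one edge) or to both ends of one of the `m - 2` remaining edges (removing
two). Conversely every such attachment yields an increasing 1,2-tree.
-/

namespace SimpleGraph

variable {k : ℕ}

def snoc (G : SimpleGraph (Fin k)) (D : Set (Fin k)) : SimpleGraph (Fin (k + 1)) where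
  Adj u v := Fin.lastCases (Fin.lastCases False (· ∈ D) v)
    (fun a => Fin.lastCases (a ∈ D) (G.Adj a) v) u
  symm := ⟨fun u v => by
    induction u using Fin.lastCases <;> induction v using Fin.lastCases <;>
      simp [adj_comm]⟩
  loopless := ⟨fun u => by induction u using Fin.lastCases <;> simp⟩

variable {G : SimpleGraph (Fin k)} {D : Set (Fin k)} {a b : Fin k}

@[simp] lemma snoc_adj_castSucc_castSucc : (G.snoc D).Adj a.castSucc b.castSucc ↔ G.Adj a b := by
  simp [snoc]

@[simp] lemma snoc_adj_castSucc_last : (G.snoc D).Adj a.castSucc (Fin.last k) ↔ a ∈ D := by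
  simp [snoc]

@[simp] lemma snoc_adj_last_castSucc : (G.snoc D).Adj (Fin.last k) a.castSucc ↔ a ∈ D := by
  simp [snoc]

def snocEquiv : SimpleGraph (Fin k) × Set (Fin k) ≃ SimpleGraph (Fin (k + 1)) where
  toFun p := p.1.snoc p.2
  invFun H := (H.comap Fin.castSucc, {a | H.Adj a.castSucc (Fin.last k)})
  left_inv p := by ext <;> simp
  right_inv H := by
    ext u v
    induction u using Fin.lastCases <;> induction v using Fin.lastCases <;> simp [adj_comm]

lemma edgeSet_snoc : (G.snoc D).edgeSet =
    Fin.castSuccEmb.sym2Map '' G.edgeSet ∪ (fun a => s(a.castSucc, Fin.last k)) '' D := by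
  rw [← edgeSet_map]
  ext e
  induction e using Sym2.ind with
  | _ u v =>
    induction u using Fin.lastCases <;> induction v using Fin.lastCases <;>
      simp [map_adj', adj_comm, eq_comm (a := Fin.last k), and_iff_right_of_imp Adj.ne]

lemma ncard_edgeSet_snoc : (G.snoc D).edgeSet.ncard = G.edgeSet.ncard + D.ncard := by
  have hdisj : Disjoint (Fin.castSuccEmb.sym2Map '' G.edgeSet)
      ((fun a => s(a.castSucc, Fin.last k)) '' D) := by
    rw [Set.disjoint_left]
    rintro _ ⟨e, -, rfl⟩ ⟨a, -, he⟩
    have : Fin.last k ∈ Fin.castSuccEmb.sym2Map e := he ▸ Sym2.mem_mk_right _ _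
    simp [Sym2.mem_map] at this
  rw [edgeSet_snoc, Set.ncard_union_eq hdisj,
    Set.ncard_image_of_injective _ Fin.castSuccEmb.sym2Map.injective,
    Set.ncard_image_of_injective _ fun a b h => Fin.castSucc_injective k (Sym2.congr_left.mp h)]

variable {V W : Type*}

def IsVertexOrEdge (G : SimpleGraph V) (S : Set V) : Prop :=
  S.Nonempty ∧ S.ncard ≤ 2 ∧ G.IsClique S

lemma isVertexOrEdge_image_iff (H : SimpleGraph W) (f : V ↪ W) (S : Set V) :
    H.IsVertexOrEdge (f '' S) ↔ (H.comap f).IsVertexOrEdge S := by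
  simp only [IsVertexOrEdge, Set.image_nonempty, Set.ncard_image_of_injective _ f.injective,
    IsClique, f.injective.injOn.pairwise_image]
  rfl

lemma ncard_coe_of_mem_edgeSet {G : SimpleGraph V} {e : Sym2 V} (he : e ∈ G.edgeSet) :
    (e : Set V).ncard = 2 := by
  induction e using Sym2.ind with
  | _ x y => rw [Sym2.coe_mk, Set.ncard_pair (G.ne_of_adj he)]

lemma isVertexOrEdge_iff [Finite V] {G : SimpleGraph V} {S : Set V} :
    G.IsVertexOrEdge S ↔ (∃ a, S = {a}) ∨ ∃ e ∈ G.edgeSet, S = e := by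
  constructor
  · rintro ⟨hne, hle, hS⟩
    have hpos : 0 < S.ncard := (Set.ncard_pos S.toFinite).mpr hne
    obtain h | h : S.ncard = 1 ∨ S.ncard = 2 := by omega
    · exact .inl (Set.ncard_eq_one.mp h)
    · obtain ⟨x, y, hxy, rfl⟩ := Set.ncard_eq_two.mp h
      exact .inr ⟨s(x, y), isClique_pair.mp hS hxy, Sym2.coe_mk.symm⟩
  · rintro (⟨a, rfl⟩ | ⟨e, he, rfl⟩)
    · exact ⟨Set.singleton_nonempty a, (Set.ncard_singleton a).trans_le one_le_two,
        isClique_singleton a⟩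
    · induction e using Sym2.ind with
      | _ x y =>
        rw [Sym2.coe_mk]
        exact ⟨Set.insert_nonempty x {y}, (Set.ncard_pair (G.ne_of_adj he)).le,
          isClique_pair.mpr fun _ => he⟩

end SimpleGraph

open SimpleGraph

section Snoc

variable {k : ℕ} {G : SimpleGraph (Fin k)} {D : Set (Fin k)}

lemma isIncreasing12Tree_iff {n : ℕ} {G : SimpleGraph (Fin n)} :
    IsIncreasing12Tree G ↔ ∀ v : Fin n, 1 ≤ v.val → G.IsVertexOrEdge (lowerNbrs G v) :=
  Iff.rfl

lemma lowerNbrs_snoc_last : lowerNbrs (G.snoc D) (Fin.last k) = Fin.castSuccEmb '' D := by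
  ext v
  induction v using Fin.lastCases <;> simp [lowerNbrs, Fin.castSucc_lt_last]

lemma lowerNbrs_snoc_castSucc (a : Fin k) :
    lowerNbrs (G.snoc D) a.castSucc = Fin.castSuccEmb '' lowerNbrs G a := by
  ext v
  induction v using Fin.lastCases <;> simp [lowerNbrs, (Fin.castSucc_lt_last a).not_gt]

lemma comap_castSucc_snoc : (G.snoc D).comap Fin.castSuccEmb = G := by
  ext; simp

lemma isIncreasing12Tree_snoc_iff (hk : 0 < k) :
    IsIncreasing12Tree (G.snoc D) ↔ IsIncreasing12Tree G ∧ G.IsVertexOrEdge D := by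
  simp only [isIncreasing12Tree_iff, Fin.forall_fin_succ', lowerNbrs_snoc_castSucc,
    lowerNbrs_snoc_last, isVertexOrEdge_image_iff, comap_castSucc_snoc, Fin.val_castSucc,
    Fin.val_last]
  simp [Nat.one_le_iff_ne_zero, hk.ne']

lemma snoc_mem_inc12Trees_iff (hk : 0 < k) {m : ℕ} :
    IsIncreasing12Tree (G.snoc D) ∧ (G.snoc D).edgeSet.ncard = m ↔
      IsIncreasing12Tree G ∧ G.IsVertexOrEdge D ∧ G.edgeSet.ncard + D.ncard = m := by
  rw [isIncreasing12Tree_snoc_iff hk, ncard_edgeSet_snoc, and_assoc]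

end Snoc

abbrev Inc12Trees (n m : ℕ) : Type :=
  {G : SimpleGraph (Fin n) // IsIncreasing12Tree G ∧ G.edgeSet.ncard = m}

lemma Nat.card_sigma_of_card_eq {ι : Type*} [Finite ι] {β : ι → Type*} [∀ i, Finite (β i)]
    {c : ℕ} (h : ∀ i, Nat.card (β i) = c) : Nat.card (Σ i, β i) = Nat.card ι * c := by
  have := Fintype.ofFinite ι
  rw [Nat.card_sigma, Finset.sum_congr rfl fun i _ => h i, Finset.sum_const, smul_eq_mul,
    Finset.card_univ, Nat.card_eq_fintype_card]

section Recurrence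

variable {k m : ℕ}

def snocInc12Trees (hk : 0 < k) (hm : 1 ≤ m) :
    Inc12Trees k (m - 1) × Fin k ⊕ (Σ G : Inc12Trees k (m - 2), G.1.edgeSet) →
      Inc12Trees (k + 1) m
  | .inl (G, a) => ⟨G.1.snoc {a}, (snoc_mem_inc12Trees_iff hk).mpr
      ⟨G.2.1, isVertexOrEdge_iff.mpr (.inl ⟨a, rfl⟩), by rw [Set.ncard_singleton, G.2.2]; omega⟩⟩
  | .inr ⟨G, e⟩ => ⟨G.1.snoc e, (snoc_mem_inc12Trees_iff hk).mpr
      ⟨G.2.1, isVertexOrEdge_iff.mpr (.inr ⟨e, e.2, rfl⟩), by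
        have : 0 < G.1.edgeSet.ncard := (Set.ncard_pos (Set.toFinite _)).mpr ⟨e, e.2⟩
        rw [ncard_coe_of_mem_edgeSet e.2]; omega⟩⟩

lemma snocInc12Trees_injective (hk : 0 < k) (hm : 1 ≤ m) :
    Function.Injective (snocInc12Trees hk hm) := by
  have key {G G' : SimpleGraph (Fin k)} {D D' : Set (Fin k)} (h : G.snoc D = G'.snoc D') :
      G = G' ∧ D = D' := Prod.mk.inj (snocEquiv.injective (a₁ := (G, D)) (a₂ := (G', D')) h)
  rintro (⟨G, a⟩ | ⟨G, e⟩) (⟨G', a'⟩ | ⟨G', e'⟩) h <;>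
    obtain ⟨hG, hD⟩ := key (congrArg Subtype.val h)
  · rw [Subtype.ext hG, Set.singleton_eq_singleton_iff.mp hD]
  · have := congrArg Set.ncard hD
    rw [Set.ncard_singleton, ncard_coe_of_mem_edgeSet e'.2] at this
    omega
  · have := congrArg Set.ncard hD
    rw [Set.ncard_singleton, ncard_coe_of_mem_edgeSet e.2] at this
    omega
  · obtain rfl := Subtype.ext hG
    rw [Subtype.ext (SetLike.coe_injective hD)]

lemma snocInc12Trees_surjective (hk : 0 < k) (hm : 1 ≤ m) :
    Function.Surjective (snocInc12Trees hk hm) := by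
  rintro ⟨H, hH⟩
  obtain ⟨⟨G, D⟩, rfl⟩ := snocEquiv.surjective H
  obtain ⟨hG, hD, hcard⟩ := (snoc_mem_inc12Trees_iff (G := G) (D := D) hk).mp hH
  rcases isVertexOrEdge_iff.mp hD with ⟨a, rfl⟩ | ⟨e, he, rfl⟩
  · rw [Set.ncard_singleton] at hcard
    refine ⟨.inl (⟨G, hG, ?_⟩, a), rfl⟩
    omega
  · rw [ncard_coe_of_mem_edgeSet he] at hcard
    refine ⟨.inr ⟨⟨G, hG, ?_⟩, ⟨e, he⟩⟩, rfl⟩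
    omega

-- For `m = 1` the truncated `m - 2 = 0` makes the second summand vanish, as it should.
lemma numInc12Trees_succ (hk : 0 < k) (hm : 1 ≤ m) :
    numInc12Trees (k + 1) m = k * numInc12Trees k (m - 1) + (m - 2) * numInc12Trees k (m - 2) := by
  rw [numInc12Trees, ← Nat.card_eq_of_bijective _
    ⟨snocInc12Trees_injective hk hm, snocInc12Trees_surjective hk hm⟩, Nat.card_sum,
    Nat.card_prod, Nat.card_sigma_of_card_eq fun G => (Nat.card_coe_set_eq _).trans G.2.2,
    Nat.card_fin, numInc12Trees, numInc12Trees, mul_comm, mul_comm (m - 2)]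

end Recurrence

lemma numInc12Trees_one (m : ℕ) : numInc12Trees 1 m = if m = 0 then 1 else 0 := by
  have hG (G : SimpleGraph (Fin 1)) : IsIncreasing12Tree G ∧ G.edgeSet.ncard = m ↔ m = 0 := by
    rw [Subsingleton.elim G ⊥, edgeSet_bot, Set.ncard_empty, eq_comm, and_iff_right_iff_imp]
    exact fun _ v hv => absurd hv (by simp)
  simp only [numInc12Trees, hG]
  split_ifs with h <;> simp [h]

/-- The numbers `c(n,m)` of increasing 1,2-trees with `n` vertices and `m` edges satisfy the
recurrence `c(n,m) = (n-1)·c(n-1,m-1) + (m-2)·c(n-1,m-2)`. -/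
theorem numInc12Trees_recurrence :
    numInc12Trees 1 0 = 1 ∧
    (∀ m : ℕ, 1 ≤ m → numInc12Trees 1 m = 0) ∧
    numInc12Trees 2 1 = 1 ∧
    (∀ n : ℕ, 2 ≤ n → ∀ m : ℕ, 2 ≤ m →
      numInc12Trees n m =
        (n - 1) * numInc12Trees (n - 1) (m - 1) + (m - 2) * numInc12Trees (n - 1) (m - 2)) := by
  refine ⟨?_, fun m hm => ?_, ?_, fun n hn m hm => ?_⟩
  · simp [numInc12Trees_one]
  · simp [numInc12Trees_one, Nat.one_le_iff_ne_zero.mp hm]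
  · simp [numInc12Trees_succ (k := 1) one_pos le_rfl, numInc12Trees_one]
  · obtain ⟨k, rfl⟩ : ∃ k, n = k + 1 := ⟨n - 1, by omega⟩
    exact numInc12Trees_succ (by omega) (by omega)
end

section
/- Fix a real number z. Suppose S : ℕ × ℕ → ℝ satisfies S(0,0) = 1, S(0,y) = 0 for all y ≥ 1, S(x+1,0) = (x+z)·S(x,0) for all x ≥ 0, and S(x+1,y) = (x+z)·S(x,y) + (x+y)·S(x,y−1) for all x ≥ 0 and y ≥ 1. Then for every x ≥ 0, the sum over y from 0 to x of S(x,y) equals (x+z)^x. -/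
/-!
Fix `n` and put `w = n + z`. Let `E₀(s) = 1` and `Eₖ₊₁(s) = w Eₖ(s) + s Eₖ(s + 1)`, so that
`Eₖ(s) = ∑ⱼ (k choose j) wʲ s⁽ᵏ⁻ʲ⁾` with rising factorials. These weights also satisfy
`Eₖ₊₁(s) = (w - k - 1) Eₖ(s + 1) + (s + 1) Eₖ(s + 2)`, which is the transpose of the recursion
for `S` in row `x = n - k - 1`. Hence `∑_y S(x, y) Eₙ₋ₓ(x + y)` does not depend on `x ≤ n`:
at `x = n` it is the row sum, at `x = 0` it is `Eₙ(0) = wⁿ`.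
-/

open Finset

def mixedPow (w : ℝ) : ℕ → ℝ → ℝ
  | 0, _ => 1
  | k + 1, s => w * mixedPow w k s + s * mixedPow w k (s + 1)

namespace mixedPow

variable (w : ℝ)

@[simp]
theorem zero_left (s : ℝ) : mixedPow w 0 s = 1 := rfl

theorem succ_left (k : ℕ) (s : ℝ) :
    mixedPow w (k + 1) s = w * mixedPow w k s + s * mixedPow w k (s + 1) := rfl

@[simp]
theorem zero_right (k : ℕ) : mixedPow w k 0 = w ^ k := by
  induction k with
  | zero => simp
  | succ k ih => rw [succ_left, ih, pow_succ]; ring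

theorem succ_right (k : ℕ) (s : ℝ) :
    mixedPow w (k + 1) (s + 1) = mixedPow w (k + 1) s + (k + 1) * mixedPow w k (s + 1) := by
  induction k generalizing s with
  | zero => simp only [succ_left, zero_left, Nat.cast_zero]; ring
  | succ k ih =>
    rw [succ_left w (k + 1) (s + 1), succ_left w (k + 1) s]
    push_cast
    linear_combination w * ih s + (s + 1) * ih (s + 1) - (k + 1) * succ_left w k (s + 1)

theorem succ_left_eq_sub (k : ℕ) (s : ℝ) :
    mixedPow w (k + 1) s
      = (w - (k + 1)) * mixedPow w k (s + 1) + (s + 1) * mixedPow w k (s + 2) := by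
  have h := succ_right w k s
  rw [succ_left w k (s + 1), add_assoc s 1 1, one_add_one_eq_two] at h
  linarith

end mixedPow

section MeirArray

variable {z : ℝ} {S : ℕ → ℕ → ℝ}

theorem meir_eq_zero_of_lt (h0 : ∀ y : ℕ, 1 ≤ y → S 0 y = 0)
    (hxy : ∀ x : ℕ, ∀ y : ℕ, 1 ≤ y →
      S (x + 1) y = ((x : ℝ) + z) * S x y + ((x : ℝ) + (y : ℝ)) * S x (y - 1)) :
    ∀ x y : ℕ, x < y → S x y = 0 := by
  intro x
  induction x with
  | zero => exact fun y hy => h0 y hy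
  | succ x ih =>
    intro y hy
    rw [hxy x y (by omega), ih y (by omega), ih (y - 1) (by omega)]
    ring

theorem meir_sum_succ_mul (hx0 : ∀ x : ℕ, S (x + 1) 0 = ((x : ℝ) + z) * S x 0)
    (hxy : ∀ x : ℕ, ∀ y : ℕ, 1 ≤ y →
      S (x + 1) y = ((x : ℝ) + z) * S x y + ((x : ℝ) + (y : ℝ)) * S x (y - 1))
    (x : ℕ) (hvan : S x (x + 1) = 0) (f : ℕ → ℝ) :
    ∑ y ∈ range (x + 2), S (x + 1) y * f y
      = ∑ y ∈ range (x + 1), S x y * (((x : ℝ) + z) * f y + ((x : ℝ) + y + 1) * f (y + 1)) := by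
  have hshift : ∑ y ∈ range (x + 2), S x y * f y = ∑ y ∈ range (x + 1), S x y * f y := by
    rw [sum_range_succ, hvan, zero_mul, add_zero]
  calc ∑ y ∈ range (x + 2), S (x + 1) y * f y
      = ((x : ℝ) + z) * ∑ y ∈ range (x + 2), S x y * f y
        + ∑ y ∈ range (x + 1), ((x : ℝ) + y + 1) * S x y * f (y + 1) := by
        rw [sum_range_succ', sum_range_succ' (fun y => S x y * f y), hx0, mul_add, mul_sum,
          add_right_comm, ← sum_add_distrib]
        congr 1
        · refine sum_congr rfl fun y _ => ?_
          rw [hxy x (y + 1) (by omega), Nat.add_sub_cancel]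
          push_cast
          ring
        · ring
    _ = ∑ y ∈ range (x + 1), S x y * (((x : ℝ) + z) * f y + ((x : ℝ) + y + 1) * f (y + 1)) := by
        rw [hshift, mul_sum, ← sum_add_distrib]
        exact sum_congr rfl fun y _ => by ring

theorem meir_sum_mul_mixedPow (h00 : S 0 0 = 1)
    (h0 : ∀ y : ℕ, 1 ≤ y → S 0 y = 0)
    (hx0 : ∀ x : ℕ, S (x + 1) 0 = ((x : ℝ) + z) * S x 0)
    (hxy : ∀ x : ℕ, ∀ y : ℕ, 1 ≤ y →
      S (x + 1) y = ((x : ℝ) + z) * S x y + ((x : ℝ) + (y : ℝ)) * S x (y - 1))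
    (x k : ℕ) :
    ∑ y ∈ range (x + 1), S x y * mixedPow ((x : ℝ) + k + z) k ((x : ℝ) + y)
      = ((x : ℝ) + k + z) ^ (x + k) := by
  induction x generalizing k with
  | zero => simp [h00]
  | succ x ih =>
    have hw : ((x + 1 : ℕ) : ℝ) + k + z = (x : ℝ) + (k + 1 : ℕ) + z := by push_cast; ring
    rw [hw, meir_sum_succ_mul hx0 hxy x (meir_eq_zero_of_lt h0 hxy x (x + 1) (by omega)),
      show x + 1 + k = x + (k + 1) by omega, ← ih (k + 1)]
    refine sum_congr rfl fun y _ => ?_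
    rw [mixedPow.succ_left_eq_sub]
    push_cast
    ring_nf

end MeirArray

/-- Meir's generalization of Ramanujan's formula: if `S` satisfies the recursion
`S(x+1,y) = (x+z)·S(x,y) + (x+y)·S(x,y-1)` with initial condition concentrated at `(0,0)`,
then the row sums are `(x+z)^x`. -/
theorem meir_row_sums (z : ℝ) (S : ℕ → ℕ → ℝ)
    (h00 : S 0 0 = 1)
    (h0 : ∀ y : ℕ, 1 ≤ y → S 0 y = 0)
    (hx0 : ∀ x : ℕ, S (x + 1) 0 = ((x : ℝ) + z) * S x 0)
    (hxy : ∀ x : ℕ, ∀ y : ℕ, 1 ≤ y →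
      S (x + 1) y = ((x : ℝ) + z) * S x y + ((x : ℝ) + (y : ℝ)) * S x (y - 1)) :
    ∀ x : ℕ, ∑ y ∈ Finset.range (x + 1), S x y = ((x : ℝ) + z) ^ x := by
  intro x
  simpa using meir_sum_mul_mixedPow h00 h0 hx0 hxy x 0
end

section
/- Define integers c(n,m) for n ≥ 1 and m ∈ ℤ by: c(1,0) = 1, c(1,m) = 0 for m ≠ 0, c(n,m) = 0 for m < 0, and c(n,m) = (n−1)·c(n−1,m−1) + (m−2)·c(n−1,m−2) for all n ≥ 2 and all m ≥ 0. Then for every n ≥ 2, the sum of c(n,m) over m from n−1 to 2n−3 equals n^(n−2) (moreover c(n,m) = 0 for m outside the range [n−1, 2n−3]). -/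
open Finset

section RowSumsAux


/-- coefficient `r!/s!` as an integer -/
def aaF (r s : ℕ) : ℤ := ∏ i ∈ Finset.Ico s r, ((i : ℤ) + 1)

/-- iterated forward difference of powers: `Δ^s [X^t] (N)` -/
def DdF : ℕ → ℕ → ℕ → ℤ
  | 0, N, t => (N : ℤ) ^ t
  | s + 1, N, t => DdF s (N + 1) t - DdF s N t

lemma aaF_self (r : ℕ) : aaF r r = 1 := by simp [aaF]

lemma aaF_succ {r s : ℕ} (h : s ≤ r) : aaF (r + 1) s = ((r : ℤ) + 1) * aaF r s := by
  rw [aaF, Finset.prod_Ico_succ_top (by omega), aaF]; ring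

lemma DdF_leibniz : ∀ s N t : ℕ,
    DdF (s + 1) N (t + 1) = ((N : ℤ) + (s : ℤ) + 1) * DdF (s + 1) N t + ((s : ℤ) + 1) * DdF s N t := by
  intro s
  induction s with
  | zero =>
    intro N t
    simp only [DdF]
    rw [pow_succ, pow_succ]
    push_cast
    ring
  | succ s IH =>
    intro N t
    have e0 : DdF (s+1+1) N (t+1) = DdF (s+1) (N+1) (t+1) - DdF (s+1) N (t+1) := rfl
    have e1 : DdF (s+1+1) N t = DdF (s+1) (N+1) t - DdF (s+1) N t := rfl
    have e2 : DdF (s+1) N t = DdF s (N+1) t - DdF s N t := rfl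
    rw [e0, IH (N+1) t, IH N t, e1, e2]
    push_cast
    ring

lemma DdF_diag : ∀ r N : ℕ, (∀ t, t < r → DdF r N t = 0) ∧ DdF r N r = (r.factorial : ℤ) := by
  intro r
  induction r with
  | zero => intro N; exact ⟨fun t ht => absurd ht (Nat.not_lt_zero t), by simp [DdF]⟩
  | succ r IH =>
    intro N
    have part1 : ∀ t, t < r + 1 → DdF (r+1) N t = 0 := by
      intro t ht
      show DdF r (N+1) t - DdF r N t = 0
      rcases Nat.lt_or_ge t r with h | h
      · rw [(IH (N+1)).1 t h, (IH N).1 t h]; ring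
      · have : t = r := by omega
        subst this
        rw [(IH (N+1)).2, (IH N).2]; ring
    refine ⟨part1, ?_⟩
    rw [DdF_leibniz r N r, part1 r (by omega), (IH N).2]
    push_cast [Nat.factorial_succ]
    ring

lemma DdF_diamond : ∀ r K : ℕ,
    DdF r (K + 2) (K + r + 1)
      = ∑ s ∈ Finset.range (r + 1), aaF r s * ((K : ℤ) + 2 + (s : ℤ)) * DdF s (K + 2) (K + s) := by
  intro r
  induction r with
  | zero =>
    intro K
    show DdF 0 (K+2) (K+0+1) = _
    simp [DdF, aaF, pow_succ]
    ring
  | succ r IH =>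
    intro K
    have hL : DdF (r+1) (K+2) (K + (r+1) + 1)
        = ((K:ℤ) + 2 + (r:ℤ) + 1) * DdF (r+1) (K+2) (K + r + 1)
          + ((r:ℤ) + 1) * DdF r (K+2) (K + r + 1) := by
      have : K + (r+1) + 1 = (K + r + 1) + 1 := by omega
      rw [this, DdF_leibniz (r) (K+2) (K+r+1)]
      push_cast
      ring
    rw [hL, IH K]
    conv_rhs => rw [Finset.sum_range_succ, aaF_self]
    have hKr : K + (r + 1) = K + r + 1 := by omega
    rw [hKr, Finset.mul_sum]
    have hsum : ∑ s ∈ Finset.range (r+1), aaF (r+1) s * ((K:ℤ) + 2 + (s:ℤ)) * DdF s (K+2) (K+s)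
        = ∑ s ∈ Finset.range (r+1),
            ((r:ℤ)+1) * (aaF r s * ((K:ℤ) + 2 + (s:ℤ)) * DdF s (K+2) (K+s)) := by
      apply Finset.sum_congr rfl
      intro s hs
      rw [aaF_succ (by simpa using Nat.lt_succ_iff.mp (Finset.mem_range.mp hs))]
      ring
    rw [hsum]
    push_cast
    ring

lemma Vcoll (G : ℕ → ℤ) : ∀ r : ℕ,
    ∑ s ∈ Finset.range (r+1), aaF r s * (∑ t ∈ Finset.range (s+1), aaF s t * G t)
      = ∑ t ∈ Finset.range (r+1), aaF r t * ((r:ℤ) + 1 - (t:ℤ)) * G t := by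
  intro r
  induction r with
  | zero => simp [aaF]
  | succ r IH =>
    rw [Finset.sum_range_succ, aaF_self, one_mul]
    have h1 : ∑ s ∈ Finset.range (r+1), aaF (r+1) s * (∑ t ∈ Finset.range (s+1), aaF s t * G t)
        = ((r:ℤ)+1) * ∑ t ∈ Finset.range (r+1), aaF r t * ((r:ℤ)+1-(t:ℤ)) * G t := by
      rw [← IH, Finset.mul_sum]
      apply Finset.sum_congr rfl
      intro s hs
      rw [aaF_succ (by simpa using Nat.lt_succ_iff.mp (Finset.mem_range.mp hs))]
      ring
    rw [h1, Finset.sum_range_succ _ (r+1)]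
    conv_rhs => rw [Finset.sum_range_succ]
    rw [aaF_self, one_mul]
    have h2 : ∑ x ∈ Finset.range (r+1), aaF (r+1) x * G x
        = ∑ x ∈ Finset.range (r+1), ((r:ℤ)+1) * (aaF r x * G x) := by
      apply Finset.sum_congr rfl
      intro x hx
      rw [aaF_succ (by simpa using Nat.lt_succ_iff.mp (Finset.mem_range.mp hx))]
      ring
    have h4 : ∑ x ∈ Finset.range (r+1), aaF (r+1) x * (((r+1:ℕ):ℤ) + 1 - (x:ℤ)) * G x
        = ∑ x ∈ Finset.range (r+1),
            (((r:ℤ)+1) * (aaF r x * ((r:ℤ)+1-(x:ℤ)) * G x) + ((r:ℤ)+1) * (aaF r x * G x)) := by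
      apply Finset.sum_congr rfl
      intro x hx
      rw [aaF_succ (by simpa using Nat.lt_succ_iff.mp (Finset.mem_range.mp hx))]
      push_cast
      ring
    rw [h2, h4, Finset.sum_add_distrib, Finset.mul_sum]
    push_cast
    ring

lemma FIN (K r : ℕ) :
    ((K:ℤ)+2) * (∑ s ∈ Finset.range (r+1), aaF r s * DdF s (K+2) (K+s))
      + (∑ s ∈ Finset.range (r+1+1), aaF (r+1) s * DdF s (K+2) (K+s))
      - (∑ s ∈ Finset.range (r+1), aaF r s * (∑ t ∈ Finset.range (s+1), aaF s t * DdF t (K+2) (K+t)))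
    = DdF r (K+3) (K+r+1) := by
  have hP : DdF r (K+3) (K+r+1) = DdF (r+1) (K+2) (K+r+1) + DdF r (K+2) (K+r+1) := by
    have h : DdF (r+1) (K+2) (K+r+1) = DdF r (K+2+1) (K+r+1) - DdF r (K+2) (K+r+1) := rfl
    rw [h, show K+2+1 = K+3 by omega]
    ring
  rw [Vcoll, hP, DdF_diamond]
  rw [Finset.sum_range_succ _ (r+1), aaF_self, one_mul, show K+(r+1) = K+r+1 by omega]
  have h3 : ∑ s ∈ Finset.range (r+1), aaF (r+1) s * DdF s (K+2) (K+s)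
      = ((r:ℤ)+1) * ∑ s ∈ Finset.range (r+1), aaF r s * DdF s (K+2) (K+s) := by
    rw [Finset.mul_sum]
    apply Finset.sum_congr rfl
    intro s hs
    rw [aaF_succ (by simpa using Nat.lt_succ_iff.mp (Finset.mem_range.mp hs))]
    ring
  rw [h3]
  have key : ∑ s ∈ Finset.range (r+1),
      (((K:ℤ)+2) * (aaF r s * DdF s (K+2) (K+s))
        + ((r:ℤ)+1) * (aaF r s * DdF s (K+2) (K+s))
        - aaF r s * ((r:ℤ)+1-(s:ℤ)) * DdF s (K+2) (K+s))
      = ∑ s ∈ Finset.range (r+1), aaF r s * ((K:ℤ)+2+(s:ℤ)) * DdF s (K+2) (K+s) := by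
    apply Finset.sum_congr rfl
    intro s hs
    ring
  rw [Finset.sum_sub_distrib, Finset.sum_add_distrib, ← Finset.mul_sum, ← Finset.mul_sum] at key
  linear_combination key


/-- rising factorial `m(m+1)⋯(m+r-1)` -/
def rhoFn (r : ℕ) (m : ℤ) : ℤ := ∏ i ∈ Finset.range r, (m + (i : ℤ))

lemma rhoFn_succ_top (r : ℕ) (m : ℤ) : rhoFn (r + 1) m = rhoFn r m * (m + (r : ℤ)) :=
  Finset.prod_range_succ _ _

lemma rhoFn_succ_left (r : ℕ) (m : ℤ) : rhoFn (r + 1) m = m * rhoFn r (m + 1) := by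
  rw [rhoFn, Finset.prod_range_succ']
  rw [rhoFn, mul_comm]
  congr 1
  · simp
  · apply Finset.prod_congr rfl
    intro i _
    push_cast
    ring

lemma rhoFn_step (r : ℕ) (m : ℤ) :
    rhoFn (r + 1) (m + 1) = ((r : ℤ) + 1) * rhoFn r (m + 1) + rhoFn (r + 1) m := by
  rw [rhoFn_succ_top, rhoFn_succ_left]; ring

lemma rhoFn_shift (r : ℕ) (m : ℤ) :
    rhoFn r (m + 1) = ∑ s ∈ Finset.range (r + 1), aaF r s * rhoFn s m := by
  induction r with
  | zero => simp [rhoFn, aaF]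
  | succ r IH =>
    rw [Finset.sum_range_succ, aaF_self, one_mul, rhoFn_step, IH, Finset.mul_sum]
    congr 1
    apply Finset.sum_congr rfl
    intro s hs
    rw [aaF_succ (by simpa using Nat.lt_succ_iff.mp (Finset.mem_range.mp hs))]
    ring

lemma rhoFn_one : ∀ r : ℕ, rhoFn r 1 = (r.factorial : ℤ) := by
  intro r
  induction r with
  | zero => simp [rhoFn]
  | succ r IH => rw [rhoFn_succ_top, IH, Nat.factorial_succ]; push_cast; ring

lemma sum_Icc_shift (f : ℤ → ℤ) (a b d : ℤ) :
    ∑ m ∈ Finset.Icc (a + d) (b + d), f m = ∑ j ∈ Finset.Icc a b, f (j + d) := by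
  rw [← Finset.map_add_right_Icc, Finset.sum_map]
  rfl

end RowSumsAux

/-- The numbers defined by the recurrence `c(n,m) = (n-1)·c(n-1,m-1) + (m-2)·c(n-1,m-2)`
with `c(1,0) = 1` have row sums `Σ_{m=n-1}^{2n-3} c(n,m) = n^(n-2)`, and vanish outside
the range `[n-1, 2n-3]`. -/
theorem rowSums_eq_pow (c : ℕ → ℤ → ℤ)
    (h10 : c 1 0 = 1)
    (h1 : ∀ m : ℤ, m ≠ 0 → c 1 m = 0)
    (hneg : ∀ n : ℕ, 1 ≤ n → ∀ m : ℤ, m < 0 → c n m = 0)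
    (hrec : ∀ n : ℕ, 2 ≤ n → ∀ m : ℤ, 0 ≤ m →
      c n m = ((n : ℤ) - 1) * c (n - 1) (m - 1) + (m - 2) * c (n - 1) (m - 2)) :
    ∀ n : ℕ, 2 ≤ n →
      (∑ m ∈ Finset.Icc ((n : ℤ) - 1) (2 * (n : ℤ) - 3), c n m) = (n : ℤ) ^ (n - 2) ∧
      ∀ m : ℤ, m < (n : ℤ) - 1 ∨ 2 * (n : ℤ) - 3 < m → c n m = 0 := by
  have key : ∀ K : ℕ,
      (∀ m : ℤ, m < (K : ℤ) + 1 ∨ 2 * (K : ℤ) + 1 < m → c (K + 2) m = 0) ∧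
      (∀ r : ℕ, ∑ m ∈ Finset.Icc ((K : ℤ) + 1) (2 * (K : ℤ) + 1), c (K + 2) m * rhoFn r m
        = DdF r (K + 2) (K + r)) := by
    intro K
    induction K with
    | zero =>
      have hvan0 : ∀ m : ℤ, m < (0 : ℤ) + 1 ∨ 2 * (0 : ℤ) + 1 < m → c 2 m = 0 := by
        intro m hm
        rcases lt_or_ge m 0 with h | h
        · exact hneg 2 one_le_two m h
        · rw [hrec 2 le_rfl m h]
          have e1 : c 1 (m - 1) = 0 := h1 _ (by omega)
          have e2 : (m - 2) * c 1 (m - 2) = 0 := by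
            rcases eq_or_ne m 2 with rfl | hne
            · norm_num
            · rw [h1 _ (by omega)]; ring
          norm_num [e1, e2]
      constructor
      · exact_mod_cast hvan0
      · intro r
        have hc21 : c 2 1 = 1 := by
          rw [hrec 2 le_rfl 1 (by norm_num)]
          norm_num
          rw [h10, h1 (-1) (by norm_num)]
          ring
        have hIcc : Finset.Icc (((0:ℕ) : ℤ) + 1) (2 * ((0:ℕ) : ℤ) + 1) = Finset.Icc (1:ℤ) 1 := by
          norm_num
        rw [hIcc, Finset.Icc_self, Finset.sum_singleton, hc21, one_mul, rhoFn_one]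
        rw [show 0 + r = r from Nat.zero_add r]
        exact ((DdF_diag r (0 + 2)).2).symm
    | succ K IH =>
      obtain ⟨ihv, ihs⟩ := IH
      have hidx : K + 1 + 2 - 1 = K + 2 := by omega
      have hvan : ∀ m : ℤ, m < ((K + 1 : ℕ) : ℤ) + 1 ∨ 2 * ((K + 1 : ℕ) : ℤ) + 1 < m →
          c (K + 1 + 2) m = 0 := by
        intro m hm
        push_cast at hm
        rcases lt_or_ge m 0 with h | h
        · exact hneg (K + 1 + 2) (by omega) m h
        · rw [hrec (K + 1 + 2) (by omega) m h, hidx]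
          have e1 : c (K + 2) (m - 1) = 0 := ihv _ (by omega)
          have e2 : c (K + 2) (m - 2) = 0 := ihv _ (by omega)
          rw [e1, e2]
          ring
      refine ⟨hvan, ?_⟩
      intro r
      have hb1 : ((K + 1 : ℕ) : ℤ) + 1 = (K : ℤ) + 2 := by push_cast; ring
      have hb2 : 2 * ((K + 1 : ℕ) : ℤ) + 1 = 2 * (K : ℤ) + 3 := by push_cast; ring
      rw [hb1, hb2]
      -- shorthand sums over the previous row's support
      set J : Finset ℤ := Finset.Icc ((K : ℤ) + 1) (2 * (K : ℤ) + 1) with hJ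
      -- Step 1: extend the interval on the left
      have hstep1 : ∑ m ∈ Finset.Icc ((K : ℤ) + 2) (2 * (K : ℤ) + 3), c (K + 1 + 2) m * rhoFn r m
          = ∑ m ∈ Finset.Icc ((K : ℤ) + 1) (2 * (K : ℤ) + 3), c (K + 1 + 2) m * rhoFn r m := by
        apply Finset.sum_subset (Finset.Icc_subset_Icc (by linarith) le_rfl)
        intro m hmem hnot
        rw [Finset.mem_Icc] at hmem
        have hm0 : c (K + 1 + 2) m = 0 := by
          apply hvan
          rw [Finset.mem_Icc] at hnot
          push_cast
          omega
        rw [hm0, zero_mul]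
      rw [hstep1]
      -- Step 2: apply the recurrence pointwise and split
      have hstep2 : ∑ m ∈ Finset.Icc ((K : ℤ) + 1) (2 * (K : ℤ) + 3), c (K + 1 + 2) m * rhoFn r m
          = (((K : ℤ) + 2) * ∑ m ∈ Finset.Icc ((K : ℤ) + 1) (2 * (K : ℤ) + 3),
                c (K + 2) (m - 1) * rhoFn r m)
            + ∑ m ∈ Finset.Icc ((K : ℤ) + 1) (2 * (K : ℤ) + 3),
                (m - 2) * c (K + 2) (m - 2) * rhoFn r m := by
        rw [Finset.mul_sum, ← Finset.sum_add_distrib]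
        apply Finset.sum_congr rfl
        intro m hm
        rw [Finset.mem_Icc] at hm
        rw [hrec (K + 1 + 2) (by omega) m (by omega), hidx]
        push_cast
        ring
      rw [hstep2]
      -- Step 3: reindex the first sum (m = j+1) and shrink to J
      have hre1 : ∑ m ∈ Finset.Icc ((K : ℤ) + 1) (2 * (K : ℤ) + 3), c (K + 2) (m - 1) * rhoFn r m
          = ∑ j ∈ J, c (K + 2) j * rhoFn r (j + 1) := by
        rw [show (2 * (K : ℤ) + 3) = (2 * (K : ℤ) + 2) + 1 by ring,
            show ((K : ℤ) + 1) = (K : ℤ) + 1 by rfl]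
        rw [sum_Icc_shift (fun m => c (K + 2) (m - 1) * rhoFn r m) ((K : ℤ)) (2 * (K : ℤ) + 2) 1]
        have hcong : ∀ j ∈ Finset.Icc ((K : ℤ)) (2 * (K : ℤ) + 2),
            c (K + 2) (j + 1 - 1) * rhoFn r (j + 1) = c (K + 2) j * rhoFn r (j + 1) := by
          intro j hj
          rw [show j + 1 - 1 = j by ring]
        rw [Finset.sum_congr rfl hcong]
        symm
        apply Finset.sum_subset (by rw [hJ]; exact Finset.Icc_subset_Icc (by linarith) (by linarith))
        intro j hmem hnot
        rw [Finset.mem_Icc] at hmem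
        rw [hJ, Finset.mem_Icc] at hnot
        rw [ihv j (by omega), zero_mul]
      -- Step 4: reindex the second sum (m = j+2) and shrink to J
      have hre2 : ∑ m ∈ Finset.Icc ((K : ℤ) + 1) (2 * (K : ℤ) + 3),
            (m - 2) * c (K + 2) (m - 2) * rhoFn r m
          = ∑ j ∈ J, j * c (K + 2) j * rhoFn r (j + 2) := by
        rw [show (2 * (K : ℤ) + 3) = (2 * (K : ℤ) + 1) + 2 by ring,
            show ((K : ℤ) + 1) = ((K : ℤ) - 1) + 2 by ring]
        rw [sum_Icc_shift (fun m => (m - 2) * c (K + 2) (m - 2) * rhoFn r m)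
            ((K : ℤ) - 1) (2 * (K : ℤ) + 1) 2]
        have hcong : ∀ j ∈ Finset.Icc ((K : ℤ) - 1) (2 * (K : ℤ) + 1),
            (j + 2 - 2) * c (K + 2) (j + 2 - 2) * rhoFn r (j + 2)
              = j * c (K + 2) j * rhoFn r (j + 2) := by
          intro j hj
          rw [show j + 2 - 2 = j by ring]
        rw [Finset.sum_congr rfl hcong]
        symm
        apply Finset.sum_subset (by rw [hJ]; exact Finset.Icc_subset_Icc (by linarith) le_rfl)
        intro j hmem hnot
        rw [Finset.mem_Icc] at hmem
        rw [hJ, Finset.mem_Icc] at hnot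
        rw [ihv j (by omega), mul_zero, zero_mul]
      rw [hre1, hre2]
      -- Step 5: pointwise identity  j·ρ_r(j+2) = ρ_{r+1}(j+1) − ρ_r(j+2)
      have hstep5 : ∑ j ∈ J, j * c (K + 2) j * rhoFn r (j + 2)
          = (∑ j ∈ J, c (K + 2) j * rhoFn (r + 1) (j + 1))
            - ∑ j ∈ J, c (K + 2) j * rhoFn r (j + 2) := by
        rw [← Finset.sum_sub_distrib]
        apply Finset.sum_congr rfl
        intro j hj
        have h5 : rhoFn (r + 1) (j + 1) = (j + 1) * rhoFn r (j + 1 + 1) := rhoFn_succ_left r (j + 1)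
        rw [h5, show j + 1 + 1 = j + 2 by ring]
        ring
      rw [hstep5]
      -- Step 6: express the U- and V-sums through the induction hypothesis
      have hU : ∀ q : ℕ, ∑ j ∈ J, c (K + 2) j * rhoFn q (j + 1)
          = ∑ s ∈ Finset.range (q + 1), aaF q s * DdF s (K + 2) (K + s) := by
        intro q
        have : ∀ j ∈ J, c (K + 2) j * rhoFn q (j + 1)
            = ∑ s ∈ Finset.range (q + 1), aaF q s * (c (K + 2) j * rhoFn s j) := by
          intro j hj
          rw [rhoFn_shift, Finset.mul_sum]
          apply Finset.sum_congr rfl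
          intro s hs
          ring
        rw [Finset.sum_congr rfl this, Finset.sum_comm]
        apply Finset.sum_congr rfl
        intro s hs
        rw [← Finset.mul_sum, ihs s]
      have hV : ∑ j ∈ J, c (K + 2) j * rhoFn r (j + 2)
          = ∑ s ∈ Finset.range (r + 1), aaF r s *
              (∑ t ∈ Finset.range (s + 1), aaF s t * DdF t (K + 2) (K + t)) := by
        have : ∀ j ∈ J, c (K + 2) j * rhoFn r (j + 2)
            = ∑ s ∈ Finset.range (r + 1), aaF r s * (c (K + 2) j * rhoFn s (j + 1)) := by
          intro j hj
          rw [show j + 2 = (j + 1) + 1 by ring, rhoFn_shift, Finset.mul_sum]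
          apply Finset.sum_congr rfl
          intro s hs
          ring
        rw [Finset.sum_congr rfl this, Finset.sum_comm]
        apply Finset.sum_congr rfl
        intro s hs
        rw [← Finset.mul_sum, hU s]
      rw [hU r, hU (r + 1), hV]
      -- Step 7: conclude with the pure finite-difference identity
      have hfin := FIN K r
      rw [show K + 1 + 2 = K + 3 by omega, show K + 1 + r = K + r + 1 by omega]
      linear_combination hfin
  intro n hn
  obtain ⟨K, rfl⟩ : ∃ K : ℕ, n = K + 2 := ⟨n - 2, by omega⟩
  obtain ⟨hv, hs⟩ := key K
  constructor
  · have h0 := hs 0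
    have hb1 : ((K + 2 : ℕ) : ℤ) - 1 = (K : ℤ) + 1 := by push_cast; ring
    have hb2 : 2 * ((K + 2 : ℕ) : ℤ) - 3 = 2 * (K : ℤ) + 1 := by push_cast; ring
    rw [hb1, hb2]
    have hsum : ∑ m ∈ Finset.Icc ((K : ℤ) + 1) (2 * (K : ℤ) + 1), c (K + 2) m
        = ∑ m ∈ Finset.Icc ((K : ℤ) + 1) (2 * (K : ℤ) + 1), c (K + 2) m * rhoFn 0 m := by
      apply Finset.sum_congr rfl
      intro m hm
      simp [rhoFn]
    rw [hsum, h0]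
    show DdF 0 (K + 2) (K + 0) = _
    rw [show K + 2 - 2 = K by omega]
    simp [DdF]
  · intro m hm
    apply hv
    push_cast at hm ⊢
    omega
end

section
/- In the ring ℚ[[x]] of formal power series, let R := Σ_{n≥1} n^(n−1) x^n/n! (the exponential generating function of rooted labeled trees) and T := Σ_{n≥1} n^(n−2) x^n/n! (the exponential generating function of unrooted labeled trees). Then T = R − R²/2. Equivalently, for every integer n ≥ 2, n^(n−2) = n^(n−1) − (1/2)·Σ_{k=1}^{n−1} binom(n,k)·k^(k−1)·(n−k)^(n−k−1). -/
/-- The exponential generating function of rooted labeled trees,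
`R(x) = Σ_{n≥1} n^(n-1) xⁿ/n!`. -/
noncomputable def rootedTreeEgf : PowerSeries ℚ :=
  PowerSeries.mk fun n => if n = 0 then 0 else (n : ℚ) ^ (n - 1) / (n.factorial : ℚ)

/-- The exponential generating function of unrooted labeled trees,
`T(x) = Σ_{n≥1} n^(n-2) xⁿ/n!`. -/
noncomputable def treeEgf : PowerSeries ℚ :=
  PowerSeries.mk fun n => if n = 0 then 0 else (n : ℚ) ^ (n - 2) / (n.factorial : ℚ)

/-!
Multiplying the coefficient sum `S = Σ_{k=1}^{n-1} C(n,k) k^(k-1) (n-k)^(n-k-1)` by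
`n = (n - k) + k` splits it into two sums which the reflection `k ↦ n - k` identifies, and each is
`n^n - n^(n-1)` by Abel's identity `Σ_{k=1}^{n} C(n,k) k^(k-1) (n-k)^(n-k) = n^n`; hence
`S = 2 n^(n-1) - 2 n^(n-2)`, which is the coefficient of `xⁿ/n!` in `2 (R - T)`.

Abel's identity follows by expanding `(n - k)^(n-k) = (n + (-k))^(n-k)` binomially: after
exchanging the sums, the inner sum over `k` is an `(n-j)`-th finite difference of `k ↦ k^(n-j-1)`
and vanishes, so only the excluded `k = 0` column, which equals `-n^n`, remains.
-/

open Finset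

theorem Nat.choose_mul_choose_sub_comm (n k j : ℕ) :
    n.choose k * (n - k).choose j = n.choose j * (n - j).choose k := by
  by_cases h : k + j ≤ n
  · have hk := Nat.choose_mul (n := n) (Nat.le_add_right k j)
    have hj := Nat.choose_mul (n := n) (Nat.le_add_left j k)
    rw [Nat.add_sub_cancel_left] at hk
    rw [Nat.add_sub_cancel] at hj
    rw [← hk, ← hj, Nat.choose_symm_add]
  · grind

theorem sum_range_alternating_choose_mul_pow_eq_zero {R : Type*} [CommRing R] {j m N : ℕ}
    (hj : j < m) (hm : m ≤ N) :
    ∑ k ∈ range (N + 1), (-1 : R) ^ (m - k) * m.choose k * (k : R) ^ j = 0 := by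
  have h := fwdDiff_iter_eq_sum_shift (1 : R) (fun r ↦ r ^ j) m 0
  rw [fwdDiff_iter_pow_eq_zero_of_lt hj] at h
  rw [← sum_subset (range_subset_range.mpr (by omega : m + 1 ≤ N + 1))]
  · simpa [zsmul_eq_mul] using h.symm
  · intro k _ hk
    simp [Nat.choose_eq_zero_of_lt (by simpa using hk : m < k)]

theorem sum_choose_mul_pow_pred_mul_pow_eq_pow {R : Type*} [CommRing R] (n : ℕ) (hn : 1 ≤ n) :
    ∑ k ∈ Icc 1 n, (n.choose k : R) * (k : R) ^ (k - 1) * ((n - k : ℕ) : R) ^ (n - k) =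
      (n : R) ^ n := by
  set g : ℕ → ℕ → R := fun j k ↦
    n.choose j * (n : R) ^ j * ((-1) ^ (n - j - k) * (n - j).choose k * (k : R) ^ (n - j - 1))
  have expand : ∀ k ∈ Icc 1 n,
      (n.choose k : R) * (k : R) ^ (k - 1) * ((n - k : ℕ) : R) ^ (n - k) =
        ∑ j ∈ range n, g j k := by
    intro k hk
    obtain ⟨hk1, hkn⟩ := mem_Icc.mp hk
    have hcast : ((n - k : ℕ) : R) = n + -k := by rw [Nat.cast_sub hkn]; ring
    rw [hcast, add_pow, mul_sum]
    calc _ = ∑ j ∈ range (n - k + 1), g j k := sum_congr rfl fun j hj ↦ by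
            have hjk : j ≤ n - k := Nat.lt_succ_iff.mp (mem_range.mp hj)
            have hc : (n.choose k : R) * (n - k).choose j = n.choose j * (n - j).choose k := by
              rw [← Nat.cast_mul, ← Nat.cast_mul, Nat.choose_mul_choose_sub_comm]
            have hp : (k : R) ^ (k - 1) * (k : R) ^ (n - j - k) = (k : R) ^ (n - j - 1) := by
              rw [← pow_add]; congr 1; omega
            rw [neg_pow, show n - k - j = n - j - k by omega]
            linear_combination
              ((n : R) ^ j * (-1) ^ (n - j - k) * (k : R) ^ (k - 1) * (k : R) ^ (n - j - k)) * hc +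
                ((n : R) ^ j * (-1) ^ (n - j - k) * n.choose j * (n - j).choose k) * hp
      _ = ∑ j ∈ range n, g j k := sum_subset (range_subset_range.mpr (by omega)) fun j _ hj ↦ by
            simp [g, Nat.choose_eq_zero_of_lt (by simp at hj; omega : n - j < k)]
  have rows : ∀ j ∈ range n, ∑ k ∈ range (n + 1), g j k = 0 := fun j hj ↦ by
    rw [← mul_sum, sum_range_alternating_choose_mul_pow_eq_zero (by simp at hj; omega) (by omega),
      mul_zero]
  have column_zero : ∑ j ∈ range n, g j 0 = -(n : R) ^ n := by
    obtain ⟨m, rfl⟩ : ∃ m, n = m + 1 := ⟨n - 1, by omega⟩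
    rw [sum_eq_single_of_mem m (self_mem_range_succ m) fun j hj hjm ↦ by
      simp [g, zero_pow (by simp at hj; omega : m + 1 - j - 1 ≠ 0)]]
    simp [g, Nat.choose_succ_self_right]
    ring
  have hrange : range (n + 1) = insert 0 (Icc 1 n) := by ext; simp; omega
  calc _ = ∑ k ∈ Icc 1 n, ∑ j ∈ range n, g j k := sum_congr rfl expand
    _ = ∑ k ∈ range (n + 1), ∑ j ∈ range n, g j k - ∑ j ∈ range n, g j 0 := by
      rw [hrange, sum_insert (by simp)]; ring
    _ = (n : R) ^ n := by rw [sum_comm, sum_eq_zero rows, column_zero]; ring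

theorem sum_choose_mul_pow_pred_mul_pow_pred {R : Type*} [CommRing R] [IsDomain R] [CharZero R]
    (n : ℕ) (hn : 2 ≤ n) :
    ∑ k ∈ Icc 1 (n - 1), (n.choose k : R) * (k : R) ^ (k - 1) * ((n - k : ℕ) : R) ^ (n - k - 1) =
      2 * (n : R) ^ (n - 1) - 2 * (n : R) ^ (n - 2) := by
  have abel_sum :
      ∑ k ∈ Icc 1 (n - 1), (n.choose k : R) * (k : R) ^ (k - 1) * ((n - k : ℕ) : R) ^ (n - k) =
        (n : R) ^ n - (n : R) ^ (n - 1) := by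
    have h := sum_choose_mul_pow_pred_mul_pow_eq_pow (R := R) n (by omega)
    rw [show Icc 1 n = insert n (Icc 1 (n - 1)) by ext; simp; omega,
      sum_insert (by simp; omega)] at h
    simpa using eq_sub_of_add_eq' h
  have reflect :
      ∑ k ∈ Icc 1 (n - 1), (n.choose k : R) * (k : R) ^ k * ((n - k : ℕ) : R) ^ (n - k - 1) =
        ∑ k ∈ Icc 1 (n - 1), (n.choose k : R) * (k : R) ^ (k - 1) * ((n - k : ℕ) : R) ^ (n - k) := by
    refine sum_nbij' (n - ·) (n - ·) ?_ ?_ ?_ ?_ fun k hk ↦ ?_ <;> simp only [mem_Icc] at * <;>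
      try omega
    rw [Nat.choose_symm (by omega), Nat.sub_sub_self (by omega)]
    ring
  have split :
      (n : R) * ∑ k ∈ Icc 1 (n - 1),
          (n.choose k : R) * (k : R) ^ (k - 1) * ((n - k : ℕ) : R) ^ (n - k - 1) =
        ∑ k ∈ Icc 1 (n - 1), (n.choose k : R) * (k : R) ^ (k - 1) * ((n - k : ℕ) : R) ^ (n - k) +
          ∑ k ∈ Icc 1 (n - 1), (n.choose k : R) * (k : R) ^ k * ((n - k : ℕ) : R) ^ (n - k - 1) := by
    rw [← sum_add_distrib, mul_sum]
    refine sum_congr rfl fun k hk ↦ ?_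
    obtain ⟨hk1, hkn⟩ := mem_Icc.mp hk
    have hn_eq : (n : R) = ((n - k : ℕ) : R) + k := by rw [Nat.cast_sub (by omega)]; ring
    rw [hn_eq, ← pow_sub_one_mul (by omega : k ≠ 0), ← pow_sub_one_mul (by omega : n - k ≠ 0),
      Nat.sub_sub]
    ring
  have hn0 : (n : R) ≠ 0 := by exact_mod_cast (by omega : n ≠ 0)
  refine mul_left_cancel₀ hn0 ?_
  rw [split, reflect, abel_sum]
  rw [← pow_sub_one_mul (by omega : n ≠ 0), ← pow_sub_one_mul (by omega : n - 1 ≠ 0), Nat.sub_sub]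
  ring

theorem coeff_rootedTreeEgf_sq (n : ℕ) :
    PowerSeries.coeff n (rootedTreeEgf ^ 2) =
      (∑ k ∈ Icc 1 (n - 1), (n.choose k : ℚ) * (k : ℚ) ^ (k - 1) * ((n - k : ℕ) : ℚ) ^ (n - k - 1)) /
        n.factorial := by
  rw [sq, PowerSeries.coeff_mul, Nat.sum_antidiagonal_eq_sum_range_succ_mk, sum_div]
  simp only [rootedTreeEgf, PowerSeries.coeff_mk]
  rw [← sum_subset (s₁ := Icc 1 (n - 1)) (fun k hk ↦ by simp at hk ⊢; omega) fun k hk hk' ↦ by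
    rcases (by simp at hk hk'; omega : k = 0 ∨ n - k = 0) with h | h <;> simp [h]]
  refine sum_congr rfl fun k hk ↦ ?_
  obtain ⟨hk1, hkn⟩ := mem_Icc.mp hk
  rw [if_neg (by omega), if_neg (by omega), Nat.cast_choose ℚ (by omega : k ≤ n)]
  field_simp

/-- The identity `T = R - R²/2` relating the generating functions of unrooted and rooted
labeled trees; equivalently, for every `n ≥ 2`,
`n^(n-2) = n^(n-1) - (1/2)·Σ_{k=1}^{n-1} C(n,k)·k^(k-1)·(n-k)^(n-k-1)`. -/
theorem treeEgf_eq_rootedTreeEgf_sub_half_sq :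
    treeEgf = rootedTreeEgf - PowerSeries.C (1 / 2 : ℚ) * rootedTreeEgf ^ 2 ∧
    ∀ n : ℕ, 2 ≤ n →
      (n : ℚ) ^ (n - 2) = (n : ℚ) ^ (n - 1) -
        (1 / 2) * ∑ k ∈ Finset.Icc 1 (n - 1),
          (n.choose k : ℚ) * (k : ℚ) ^ (k - 1) * ((n - k : ℕ) : ℚ) ^ (n - k - 1) := by
  refine ⟨?_, fun n hn ↦ by rw [sum_choose_mul_pow_pred_mul_pow_pred n hn]; ring⟩
  ext n
  rw [map_sub, PowerSeries.coeff_C_mul, coeff_rootedTreeEgf_sq]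
  simp only [treeEgf, rootedTreeEgf, PowerSeries.coeff_mk]
  rcases n with _ | _ | n
  · simp
  · simp
  · rw [if_neg (by omega), if_neg (by omega), sum_choose_mul_pow_pred_mul_pow_pred _ (by omega)]
    field_simp
    ring
end
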